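/- Let A be a commutative semiring and a, b ∈ A. Define R(a,b) = {(ax+by+z, bx+ay+z) : x,y,z ∈ A}. Then R(a,b)₊ = {(u,v) : (u+s, v+s) ∈ R(a,b) for some s ∈ A} is a congruence on A, and R(a,b) ⊆ {(a,b)}^c ⊆ R(a,b)₊, where {(a,b)}^c is the congruence generated by the single pair (a,b). -/

import Mathlib

/-- `ρ` is a congruence on the commutative semiring `A`. -/
def IsCong {A : Type*} [CommSemiring A] (ρ : Set (A × A)) : Prop :=
  (∀ a : A, (a, a) ∈ ρ) ∧
  (∀ a b : A, (a, b) ∈ ρ → (b, a) ∈ ρ) ∧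
  (∀ a b c : A, (a, b) ∈ ρ → (b, c) ∈ ρ → (a, c) ∈ ρ) ∧
  (∀ a b c d : A, (a, b) ∈ ρ → (c, d) ∈ ρ → (a + c, b + d) ∈ ρ) ∧
  (∀ a b c d : A, (a, b) ∈ ρ → (c, d) ∈ ρ → (a * c, b * d) ∈ ρ)

/-- The congruence generated by a relation `R`: the smallest congruence containing `R`. -/
def conGenS {A : Type*} [CommSemiring A] (R : Set (A × A)) : Set (A × A) :=
  ⋂₀ {σ | IsCong σ ∧ R ⊆ σ}

/-- `σ₊ = {(u,v) : (u+s, v+s) ∈ σ for some s}`. -/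
def plusPart {A : Type*} [CommSemiring A] (σ : Set (A × A)) : Set (A × A) :=
  {p | ∃ s : A, (p.1 + s, p.2 + s) ∈ σ}

/-- `R(a,b) = {(ax+by+z, bx+ay+z) : x,y,z ∈ A}`. -/
def Rab {A : Type*} [CommSemiring A] (a b : A) : Set (A × A) :=
  {p | ∃ x y z : A, p = (a * x + b * y + z, b * x + a * y + z)}

/-!
Cancelling the common summand `z`, membership of `(u, v)` in `R(a,b)₊` becomes the equation
`u + (b x + a y) + w = v + (a x + b y) + w` for some `x y w`. Reflexivity, symmetry,
transitivity and compatibility with adding or multiplying a fixed element on the right can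
be read off this equation, and through transitivity these one-sided compatibilities already
make a congruence. Every congruence containing `(a,b)` relates `a x + b y + z` to
`b x + a y + z`, and `(a,b)` itself lies in `R(a,b)₊` (take `x = 1`), whence the two
inclusions.
-/

section Congruence

variable {A : Type*} [CommSemiring A]

theorem isCong_of_add_right_of_mul_right {ρ : Set (A × A)}
    (refl : ∀ a, (a, a) ∈ ρ) (symm : ∀ a b, (a, b) ∈ ρ → (b, a) ∈ ρ)
    (trans : ∀ a b c, (a, b) ∈ ρ → (b, c) ∈ ρ → (a, c) ∈ ρ)
    (add_right : ∀ a b c, (a, b) ∈ ρ → (a + c, b + c) ∈ ρ)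
    (mul_right : ∀ a b c, (a, b) ∈ ρ → (a * c, b * c) ∈ ρ) :
    IsCong ρ := by
  refine ⟨refl, symm, trans, fun a b c d hab hcd => ?_, fun a b c d hab hcd => ?_⟩
  · refine trans _ (b + c) _ (add_right a b c hab) ?_
    simpa only [add_comm b] using add_right c d b hcd
  · refine trans _ (b * c) _ (mul_right a b c hab) ?_
    simpa only [mul_comm b] using mul_right c d b hcd

theorem conGenS_subset {R σ : Set (A × A)} (hσ : IsCong σ) (hR : R ⊆ σ) :
    conGenS R ⊆ σ :=
  Set.sInter_subset_of_mem ⟨hσ, hR⟩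

end Congruence

section Rab

variable {A : Type*} [CommSemiring A] {a b : A}

theorem mem_plusPart_Rab {u v : A} :
    (u, v) ∈ plusPart (Rab a b) ↔
      ∃ x y w : A, u + (b * x + a * y) + w = v + (a * x + b * y) + w := by
  constructor
  · rintro ⟨s, x, y, z, h⟩
    obtain ⟨hu, hv⟩ := Prod.mk.inj h
    refine ⟨x, y, s, ?_⟩
    calc u + (b * x + a * y) + s = (u + s) + (b * x + a * y) := by ring
      _ = (v + s) + (a * x + b * y) := by rw [hu, hv]; ring
      _ = v + (a * x + b * y) + s := by ring
  · rintro ⟨x, y, w, h⟩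
    refine ⟨b * x + a * y + w, x, y, v + w, Prod.ext ?_ (by ring)⟩
    calc u + (b * x + a * y + w) = v + (a * x + b * y) + w := by rw [← h]; ring
      _ = a * x + b * y + (v + w) := by ring

theorem isCong_plusPart_Rab : IsCong (plusPart (Rab a b)) := by
  refine isCong_of_add_right_of_mul_right ?refl ?symm ?trans ?add_right ?mul_right <;>
    simp only [mem_plusPart_Rab]
  case refl => exact fun u => ⟨0, 0, 0, by ring⟩
  case symm =>
    rintro u v ⟨x, y, w, h⟩
    exact ⟨y, x, w, by rw [add_comm (b * y), add_comm (a * y), ← h]⟩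
  case trans =>
    rintro u v t ⟨x₁, y₁, w₁, h₁⟩ ⟨x₂, y₂, w₂, h₂⟩
    refine ⟨x₁ + x₂, y₁ + y₂, v + w₁ + w₂, ?_⟩
    convert congrArg₂ (· + ·) h₁ h₂ using 1 <;> ring
  case add_right =>
    rintro u v c ⟨x, y, w, h⟩
    exact ⟨x, y, w, by convert congrArg (· + c) h using 1 <;> ring⟩
  case mul_right =>
    rintro u v c ⟨x, y, w, h⟩
    exact ⟨x * c, y * c, w * c, by convert congrArg (· * c) h using 1 <;> ring⟩

theorem Rab_subset_of_isCong {σ : Set (A × A)} (hσ : IsCong σ) (hab : (a, b) ∈ σ) :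
    Rab a b ⊆ σ := by
  obtain ⟨refl, symm, -, add, mul⟩ := hσ
  rintro _ ⟨x, y, z, rfl⟩
  exact add _ _ z z (add _ _ _ _ (mul _ _ x x hab (refl x)) (mul _ _ y y (symm _ _ hab) (refl y)))
    (refl z)

theorem mem_plusPart_Rab_self : (a, b) ∈ plusPart (Rab a b) :=
  mem_plusPart_Rab.2 ⟨1, 0, 0, by ring⟩

end Rab

/-- `R(a,b)₊` is a congruence on `A`, and
`R(a,b) ⊆ {(a,b)}^c ⊆ R(a,b)₊`. -/
theorem Rab_plusPart_isCong {A : Type*} [CommSemiring A] (a b : A) :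
    IsCong (plusPart (Rab a b)) ∧
      Rab a b ⊆ conGenS {(a, b)} ∧ conGenS {(a, b)} ⊆ plusPart (Rab a b) := by
  refine ⟨isCong_plusPart_Rab, ?_, ?_⟩
  · exact Set.subset_sInter fun σ ⟨hσ, hab⟩ => Rab_subset_of_isCong hσ (hab rfl)
  · exact conGenS_subset isCong_plusPart_Rab (Set.singleton_subset_iff.2 mem_plusPart_Rab_self)
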